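/- For 1 ≤ i < n, the set of 123-avoiding permutations of {1,...,n} with π(1) = i and π(2) = n is in bijection with the set of 123-avoiding permutations of {1,...,n-1} with first entry i, via deleting the entry n. -/
import Mathlib

def Avoids123 {n : ℕ} (π : Equiv.Perm (Fin n)) : Prop :=
  ¬ ∃ i j k : Fin n, i < j ∧ j < k ∧ π i < π j ∧ π j < π k

namespace Bij123

variable {m : ℕ}

/-- position embedding skipping position 1 -/
def pemb (k : Fin (m+1)) : Fin (m+2) :=
  if k.val = 0 then 0 else k.succ

lemma pemb_val (k : Fin (m+1)) : (pemb k).val = if k.val = 0 then 0 else k.val + 1 := by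
  unfold pemb; split <;> simp

lemma pemb_ne_one (k : Fin (m+1)) : pemb k ≠ ⟨1, by omega⟩ := by
  intro h
  have h' : (pemb k).val = 1 := congrArg Fin.val h
  rw [pemb_val] at h'
  split at h' <;> omega

lemma pemb_strictMono : StrictMono (pemb (m := m)) := by
  intro a b hab
  have h : a.val < b.val := hab
  rw [Fin.lt_def, pemb_val, pemb_val]
  split_ifs <;> omega

lemma pemb_injective : Function.Injective (pemb (m := m)) :=
  pemb_strictMono.injective

/-- the forward map: delete the entry at position 1 (whose value is the max) -/
noncomputable def delMap (π : Equiv.Perm (Fin (m+2)))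
    (hπ : π ⟨1, by omega⟩ = Fin.last (m+1)) :
    Equiv.Perm (Fin (m+1)) :=
  Equiv.ofBijective
    (fun k => ⟨(π (pemb k)).val, by
      have hne : π (pemb k) ≠ Fin.last (m+1) := by
        intro h
        exact pemb_ne_one k (π.injective (h.trans hπ.symm))
      have h1 : (π (pemb k)).val ≠ m + 1 := fun h => hne (Fin.ext h)
      have h2 := (π (pemb k)).isLt
      omega⟩)
    (Finite.injective_iff_bijective.mp (by
      intro a b hab
      have h := congrArg Fin.val hab
      exact pemb_injective (π.injective (Fin.ext h))))

lemma delMap_apply (π : Equiv.Perm (Fin (m+2))) (hπ : π ⟨1, by omega⟩ = Fin.last (m+1))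
    (k : Fin (m+1)) : (delMap π hπ k).val = (π (pemb k)).val := rfl

/-- position "retraction": the index in Fin (m+1) of a position ≠ 1 -/
def pret (j : Fin (m+2)) (_hj : j.val ≠ 1) : Fin (m+1) :=
  if _h : j.val = 0 then 0 else ⟨j.val - 1, by have := j.isLt; omega⟩

lemma pret_val (j : Fin (m+2)) (_hj : j.val ≠ 1) :
    (pret j _hj).val = if j.val = 0 then 0 else j.val - 1 := by
  unfold pret; split_ifs <;> simp

lemma pemb_pret (j : Fin (m+2)) (hj : j.val ≠ 1) : pemb (pret j hj) = j := by
  apply Fin.ext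
  rw [pemb_val, pret_val]
  split_ifs <;> omega

/-- the backward map: insert the max value at position 1 -/
noncomputable def insFun (σ : Equiv.Perm (Fin (m+1))) (j : Fin (m+2)) : Fin (m+2) :=
  if h : j.val = 1 then Fin.last (m+1) else (σ (pret j h)).castSucc

lemma castSucc_ne_last (x : Fin (m+1)) : x.castSucc ≠ Fin.last (m+1) := by
  intro h
  have := congrArg Fin.val h
  simp at this
  omega

lemma pret_injective (j j' : Fin (m+2)) (hj : j.val ≠ 1) (hj' : j'.val ≠ 1)
    (h : pret j hj = pret j' hj') : j = j' := by
  rw [← pemb_pret j hj, ← pemb_pret j' hj', h]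

lemma insFun_injective (σ : Equiv.Perm (Fin (m+1))) : Function.Injective (insFun σ) := by
  intro a b hab
  unfold insFun at hab
  split_ifs at hab with h1 h2 h3
  · apply Fin.ext; omega
  · exact absurd hab.symm (castSucc_ne_last _)
  · exact absurd hab (castSucc_ne_last _)
  · exact pret_injective a b h1 h3 (σ.injective (Fin.castSucc_injective _ hab))

noncomputable def insMap (σ : Equiv.Perm (Fin (m+1))) : Equiv.Perm (Fin (m+2)) :=
  Equiv.ofBijective (insFun σ) (Finite.injective_iff_bijective.mp (insFun_injective σ))

lemma insMap_apply (σ : Equiv.Perm (Fin (m+1))) (j : Fin (m+2)) :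
    insMap σ j = insFun σ j := rfl

lemma insMap_one (σ : Equiv.Perm (Fin (m+1))) :
    insMap σ ⟨1, by omega⟩ = Fin.last (m+1) := by
  rw [insMap_apply]; unfold insFun; simp

lemma insMap_apply_ne_one (σ : Equiv.Perm (Fin (m+1))) (j : Fin (m+2)) (hj : j.val ≠ 1) :
    insMap σ j = (σ (pret j hj)).castSucc := by
  rw [insMap_apply]; unfold insFun; rw [dif_neg hj]

lemma insMap_avoids (σ : Equiv.Perm (Fin (m+1))) (hσ : Avoids123 σ) :
    Avoids123 (insMap σ) := by
  rintro ⟨a, b, c, hab, hbc, h1, h2⟩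
  have ha : a.val ≠ 1 := by
    intro h
    have h' : a = ⟨1, by omega⟩ := Fin.ext h
    rw [h', insMap_one] at h1
    have hb := (insMap σ b).isLt
    have := Fin.lt_def.mp h1
    simp at this
    omega
  have hb : b.val ≠ 1 := by
    intro h
    have h' : b = ⟨1, by omega⟩ := Fin.ext h
    rw [h', insMap_one] at h2
    have hc := (insMap σ c).isLt
    have := Fin.lt_def.mp h2
    simp at this
    omega
  have hc : c.val ≠ 1 := by
    have hbv : b.val < c.val := hbc
    have hav : a.val < b.val := hab
    omega
  apply hσ
  refine ⟨pret a ha, pret b hb, pret c hc, ?_, ?_, ?_, ?_⟩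
  · have hav : a.val < b.val := hab
    rw [Fin.lt_def, pret_val, pret_val]
    split_ifs <;> omega
  · have hbv : b.val < c.val := hbc
    rw [Fin.lt_def, pret_val, pret_val]
    split_ifs <;> omega
  · rw [insMap_apply_ne_one σ a ha, insMap_apply_ne_one σ b hb] at h1
    exact Fin.castSucc_lt_castSucc_iff.mp h1
  · rw [insMap_apply_ne_one σ b hb, insMap_apply_ne_one σ c hc] at h2
    exact Fin.castSucc_lt_castSucc_iff.mp h2

lemma delMap_avoids (π : Equiv.Perm (Fin (m+2))) (hπ : π ⟨1, by omega⟩ = Fin.last (m+1))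
    (h : Avoids123 π) : Avoids123 (delMap π hπ) := by
  rintro ⟨a, b, c, hab, hbc, h1, h2⟩
  apply h
  refine ⟨pemb a, pemb b, pemb c, pemb_strictMono hab, pemb_strictMono hbc, ?_, ?_⟩
  · have := Fin.lt_def.mp h1
    rw [delMap_apply, delMap_apply] at this
    exact Fin.lt_def.mpr this
  · have := Fin.lt_def.mp h2
    rw [delMap_apply, delMap_apply] at this
    exact Fin.lt_def.mpr this

lemma del_ins (σ : Equiv.Perm (Fin (m+1))) :
    delMap (insMap σ) (insMap_one σ) = σ := by
  apply Equiv.ext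
  intro k
  apply Fin.ext
  rw [delMap_apply]
  rw [insMap_apply_ne_one σ (pemb k) (fun h => pemb_ne_one k (Fin.ext h))]
  simp only [Fin.coe_castSucc]
  have hkk : pret (pemb k) (fun h => pemb_ne_one k (Fin.ext h)) = k :=
    pemb_injective (pemb_pret _ _)
  rw [hkk]

lemma ins_del (π : Equiv.Perm (Fin (m+2))) (hπ : π ⟨1, by omega⟩ = Fin.last (m+1)) :
    insMap (delMap π hπ) = π := by
  apply Equiv.ext
  intro j
  by_cases hj : j.val = 1
  · have hjj : j = ⟨1, by omega⟩ := Fin.ext hj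
    rw [hjj, insMap_one, hπ]
  · rw [insMap_apply_ne_one _ j hj]
    apply Fin.ext
    simp only [Fin.coe_castSucc]
    rw [delMap_apply, pemb_pret]

end Bij123

set_option maxHeartbeats 1000000 in
theorem bij_delete_n_12_prefix (n i : ℕ) (hi : 1 ≤ i) (hin : i < n) :
    ∃ e : {π : Equiv.Perm (Fin n) // Avoids123 π ∧
            ∀ m : Fin n, (m.val = 0 → ((π m : Fin n) : ℕ) + 1 = i) ∧
                         (m.val = 1 → ((π m : Fin n) : ℕ) + 1 = n)} ≃
          {σ : Equiv.Perm (Fin (n - 1)) // Avoids123 σ ∧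
            ∀ m : Fin (n - 1), m.val = 0 → ((σ m : Fin (n - 1)) : ℕ) + 1 = i},
      ∀ π (k : Fin (n - 1)),
        (((e π).val k : Fin (n - 1)) : ℕ) =
          if k.val = 0 then ((π.val ⟨0, by omega⟩ : Fin n) : ℕ)
          else ((π.val ⟨k.val + 1, by have := k.isLt; omega⟩ : Fin n) : ℕ) := by
  obtain ⟨m, rfl⟩ : ∃ m, n = m + 2 := ⟨n - 2, by omega⟩
  refine ⟨⟨fun π => ⟨Bij123.delMap π.val (by
        have h1 := (π.prop.2 ⟨1, by omega⟩).2 rfl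
        apply Fin.ext
        simp only [Fin.val_last]
        omega), ?_, ?_⟩,
      fun σ => ⟨Bij123.insMap σ.val, ?_, ?_⟩, ?_, ?_⟩, ?_⟩
  · exact Bij123.delMap_avoids _ _ π.prop.1
  · intro k hk
    have h0 := (π.prop.2 ⟨0, by omega⟩).1 rfl
    show (π.val (Bij123.pemb k)).val + 1 = i
    have he : Bij123.pemb k = ⟨0, by omega⟩ := by
      apply Fin.ext
      rw [Bij123.pemb_val]
      simp [hk]
    rw [he]
    omega
  · exact Bij123.insMap_avoids _ σ.prop.1
  · intro k
    constructor
    · intro hk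
      have h0 := σ.prop.2 ⟨0, by omega⟩ rfl
      have hk0 : k = ⟨0, by omega⟩ := Fin.ext hk
      rw [hk0, Bij123.insMap_apply_ne_one _ _ (by simp)]
      simp only [Fin.coe_castSucc]
      have hp : Bij123.pret (⟨0, by omega⟩ : Fin (m+2)) (by simp) = (0 : Fin (m+1)) := by
        apply Fin.ext
        rw [Bij123.pret_val]
        simp
      rw [hp]
      simpa using h0
    · intro hk
      have hk1 : k = ⟨1, by omega⟩ := Fin.ext hk
      rw [hk1, Bij123.insMap_one]
      simp
  · intro π
    apply Subtype.ext
    exact Bij123.ins_del π.val (by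
      have h1 := (π.prop.2 ⟨1, by omega⟩).2 rfl
      apply Fin.ext
      simp only [Fin.val_last]
      omega)
  · intro σ
    apply Subtype.ext
    exact Bij123.del_ins σ.val
  · intro π k
    show (π.val (Bij123.pemb k)).val = _
    by_cases hk : k.val = 0
    · rw [if_pos hk]
      have he : Bij123.pemb k = ⟨0, by omega⟩ := by
        apply Fin.ext
        rw [Bij123.pemb_val]
        simp [hk]
      rw [he]
    · rw [if_neg hk]
      have he : Bij123.pemb k = ⟨k.val + 1, by have := k.isLt; omega⟩ := by
        apply Fin.ext
        rw [Bij123.pemb_val]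
        simp [hk]
      rw [he]
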